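/- arXiv:1510.02784 — 6 statements merged into one kernel-verified Lean document; each statement's English description precedes it below -/
import Mathlib

section
/- Let f_1, …, f_m be complex polynomials, all of degree n with positive (real) leading coefficients, and suppose each f_i has all its zeros in the disk |z - z_0| ≤ r. Then F = f_1 + ⋯ + f_m has all its zeros in the disk |z - z_0| ≤ r / sin(π/(2n)). -/
/-!
Put `w = z - z₀` and `θ = π / (2n)`, and suppose `r < |w| sin θ`. For every zero `a` of a
summand, `(z - a) / w = 1 - (a - z₀) / w` lies within `sin θ` of `1`, hence in the open sector
`|arg| < θ`. Multiplying the `n` factors, `f_i(z) / w^n` is a positive multiple of a point of the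
sector `|arg| < nθ = π/2`, i.e. it has positive real part. So the real part of `F(z) / w^n` is
positive and `F(z) ≠ 0`.
-/

open Complex Polynomial
open scoped Real

lemma pi_div_two_mul_natCast_mem_Ioc {n : ℕ} (hn : 0 < n) : π / (2 * n) ∈ Set.Ioc 0 (π / 2) := by
  have hn' : (1 : ℝ) ≤ n := by exact_mod_cast hn
  refine ⟨by positivity, div_le_div_of_nonneg_left Real.pi_pos.le two_pos ?_⟩
  linarith

namespace Complex

-- The law of sines in the triangle `0, 1, u`.
lemma abs_im_le_norm_mul_norm_sub_one (u : ℂ) : |u.im| ≤ ‖u‖ * ‖u - 1‖ := by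
  have h : u.im = -(u * (starRingEnd ℂ) (u - 1)).im := by
    simp only [mul_im, map_sub, map_one, sub_re, sub_im, conj_re, conj_im, one_re, one_im]
    ring
  rw [h, abs_neg, ← norm_conj (u - 1), ← norm_mul]
  exact abs_im_le_norm _

lemma abs_arg_lt_of_norm_sub_one_lt {u : ℂ} {θ : ℝ} (hθ₀ : 0 ≤ θ) (hθ : θ ≤ π / 2)
    (hu : ‖u - 1‖ < Real.sin θ) : |arg u| < θ := by
  have hre : 0 < u.re := by
    have := (abs_re_le_norm (u - 1)).trans_lt (hu.trans_le (Real.sin_le_one θ))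
    rw [sub_re, one_re, abs_lt] at this
    linarith
  have hu0 : u ≠ 0 := fun h => by simp [h] at hre
  have harg : |arg u| < π / 2 := abs_arg_lt_pi_div_two_iff.2 (Or.inl hre)
  have hsin : Real.sin |arg u| < Real.sin θ := by
    rw [← Real.abs_sin_eq_sin_abs_of_abs_le_pi (by linarith [Real.pi_pos]), sin_arg, abs_div,
      abs_norm, div_lt_iff₀ (norm_pos_iff.2 hu0)]
    calc |u.im| ≤ ‖u‖ * ‖u - 1‖ := abs_im_le_norm_mul_norm_sub_one u
      _ < Real.sin θ * ‖u‖ := by rw [mul_comm]; gcongr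
  exact (Real.strictMonoOn_sin.lt_iff_lt ⟨by linarith [abs_nonneg (arg u)], harg.le⟩
    ⟨by linarith, hθ⟩).1 hsin

/-- The open sector `{ρ e^{iφ} | ρ > 0, |φ| < α}`. Angles are not reduced modulo `2π`, so that
they simply add under multiplication. -/
def sector (α : ℝ) : Set ℂ := {u | ∃ ρ φ : ℝ, 0 < ρ ∧ |φ| < α ∧ u = ρ * exp (φ * I)}

lemma mem_sector_of_abs_arg_lt {u : ℂ} {α : ℝ} (hu : u ≠ 0) (harg : |arg u| < α) :
    u ∈ sector α :=
  ⟨‖u‖, arg u, norm_pos_iff.2 hu, harg, (norm_mul_exp_arg_mul_I u).symm⟩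

lemma mul_mem_sector {u v : ℂ} {α β : ℝ} (hu : u ∈ sector α) (hv : v ∈ sector β) :
    u * v ∈ sector (α + β) := by
  obtain ⟨ρ, φ, hρ, hφ, rfl⟩ := hu
  obtain ⟨σ, ψ, hσ, hψ, rfl⟩ := hv
  refine ⟨ρ * σ, φ + ψ, mul_pos hρ hσ, (abs_add_le φ ψ).trans_lt (add_lt_add hφ hψ), ?_⟩
  push_cast
  rw [add_mul, exp_add]
  ring

lemma multiset_prod_mem_sector {s : Multiset ℂ} {α : ℝ} (hs₀ : s ≠ 0)
    (hs : ∀ u ∈ s, u ∈ sector α) : s.prod ∈ sector (Multiset.card s * α) := by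
  induction s using Multiset.induction_on with
  | empty => exact absurd rfl hs₀
  | cons a s ih =>
    have ha := hs a (Multiset.mem_cons_self a s)
    rcases eq_or_ne s 0 with rfl | hs₀
    · simpa using ha
    rw [Multiset.prod_cons, Multiset.card_cons, Nat.cast_succ, add_mul, one_mul, add_comm]
    exact mul_mem_sector ha (ih hs₀ fun u hu => hs u (Multiset.mem_cons_of_mem hu))

lemma re_pos_of_mem_sector {u : ℂ} (hu : u ∈ sector (π / 2)) : 0 < u.re := by
  obtain ⟨ρ, φ, hρ, hφ, rfl⟩ := hu
  rw [re_ofReal_mul, exp_ofReal_mul_I_re]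
  exact mul_pos hρ (Real.cos_pos_of_mem_Ioo (abs_lt.1 hφ))

lemma mem_sector_of_norm_sub_one_lt {u : ℂ} {θ : ℝ} (hθ₀ : 0 ≤ θ) (hθ : θ ≤ π / 2)
    (hu : ‖u - 1‖ < Real.sin θ) : u ∈ sector θ := by
  refine mem_sector_of_abs_arg_lt ?_ (abs_arg_lt_of_norm_sub_one_lt hθ₀ hθ hu)
  rintro rfl
  simpa using hu.trans_le (Real.sin_le_one θ)

end Complex

namespace Polynomial

lemma Splits.eval_div_pow_natDegree {K : Type*} [Field K] {p : K[X]} (hp : p.Splits) (z w : K) :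
    p.eval z / w ^ p.natDegree = p.leadingCoeff * (p.roots.map fun a => (z - a) / w).prod := by
  rw [hp.eval_eq_prod_roots, Multiset.prod_map_div, Multiset.map_const', Multiset.prod_replicate,
    ← hp.natDegree_eq_card_roots, mul_div_assoc]

lemma prod_roots_div_mem_sector {p : ℂ[X]} {z z₀ : ℂ} {r θ : ℝ} (hp : 0 < p.natDegree)
    (hθ₀ : 0 ≤ θ) (hθ : θ ≤ π / 2) (hroots : ∀ a, p.IsRoot a → ‖a - z₀‖ ≤ r)
    (hz : r < ‖z - z₀‖ * Real.sin θ) :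
    (p.roots.map fun a => (z - a) / (z - z₀)).prod ∈ sector (p.natDegree * θ) := by
  have hcard : Multiset.card p.roots = p.natDegree :=
    (IsAlgClosed.splits p).natDegree_eq_card_roots.symm
  have hfactor : ∀ a ∈ p.roots, (z - a) / (z - z₀) ∈ sector θ := by
    intro a ha
    have ha' : ‖a - z₀‖ < ‖z - z₀‖ * Real.sin θ := (hroots a (isRoot_of_mem_roots ha)).trans_lt hz
    have hw : z - z₀ ≠ 0 := fun hw =>
      (norm_nonneg _).not_gt (by simpa [hw] using ha')
    refine mem_sector_of_norm_sub_one_lt hθ₀ hθ ?_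
    have : (z - a) / (z - z₀) - 1 = -((a - z₀) / (z - z₀)) := by field_simp; ring
    rwa [this, norm_neg, norm_div, div_lt_iff₀ (norm_pos_iff.2 hw), mul_comm]
  have hroots₀ : p.roots ≠ 0 := Multiset.card_pos.1 (hcard ▸ hp)
  simpa [hcard] using multiset_prod_mem_sector (s := p.roots.map fun a => (z - a) / (z - z₀))
    (by simpa using hroots₀) (Multiset.forall_mem_map_iff.2 hfactor)

lemma re_eval_div_pow_natDegree_pos {p : ℂ[X]} {z z₀ : ℂ} {r : ℝ} (hp : 0 < p.natDegree)
    (hlead_im : p.leadingCoeff.im = 0) (hlead_re : 0 < p.leadingCoeff.re)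
    (hroots : ∀ a, p.IsRoot a → ‖a - z₀‖ ≤ r)
    (hz : r < ‖z - z₀‖ * Real.sin (π / (2 * p.natDegree))) :
    0 < (p.eval z / (z - z₀) ^ p.natDegree).re := by
  obtain ⟨hθ₀, hθ⟩ := pi_div_two_mul_natCast_mem_Ioc hp
  have hprod := prod_roots_div_mem_sector hp hθ₀.le hθ hroots hz
  have hnθ : (p.natDegree : ℝ) * (π / (2 * p.natDegree)) = π / 2 := by
    field_simp [hp.ne']
  rw [hnθ] at hprod
  rw [(IsAlgClosed.splits p).eval_div_pow_natDegree, mul_re, hlead_im, zero_mul, sub_zero]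
  exact mul_pos hlead_re (re_pos_of_mem_sector hprod)

end Polynomial

/-- Tchakaloff's theorem: if f_1, …, f_m all have degree n, positive real leading
coefficients and all their zeros in the disk |z - z₀| ≤ r, then all zeros of
F = f_1 + ⋯ + f_m lie in the disk |z - z₀| ≤ r / sin(π/(2n)). -/
theorem tchakaloff (n m : ℕ) (hn : 1 ≤ n) (hm : 1 ≤ m)
    (f : Fin m → Polynomial ℂ) (z₀ : ℂ) (r : ℝ)
    (hdeg : ∀ i, (f i).natDegree = n)
    (hlead : ∀ i, ((f i).leadingCoeff.im = 0 ∧ 0 < (f i).leadingCoeff.re))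
    (hroots : ∀ i, ∀ z : ℂ, (f i).IsRoot z → ‖z - z₀‖ ≤ r) :
    ∀ z : ℂ, (∑ i, f i).IsRoot z →
      ‖z - z₀‖ ≤ r / Real.sin (Real.pi / (2 * n)) := by
  intro z hz
  by_contra! hfar
  obtain ⟨hθ₀, hθ⟩ := pi_div_two_mul_natCast_mem_Ioc hn
  have hsin : 0 < Real.sin (π / (2 * n)) :=
    Real.sin_pos_of_pos_of_lt_pi hθ₀ (hθ.trans_lt (by linarith [Real.pi_pos]))
  have hr : r < ‖z - z₀‖ * Real.sin (π / (2 * n)) := (div_lt_iff₀ hsin).1 hfar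
  have hpos : ∀ i, 0 < ((f i).eval z / (z - z₀) ^ n).re := fun i => by
    have := re_eval_div_pow_natDegree_pos ((hdeg i).symm ▸ hn) (hlead i).1 (hlead i).2 (hroots i)
      (by rwa [hdeg i])
    rwa [hdeg i] at this
  have hsum : (∑ i, (f i).eval z / (z - z₀) ^ n).re = 0 := by
    rw [← Finset.sum_div, ← eval_finsetSum, hz.eq_zero, zero_div, zero_re]
  rw [re_sum] at hsum
  exact (Finset.sum_pos (fun i _ => hpos i) (Finset.univ_nonempty_iff.2 ⟨⟨0, hm⟩⟩)).ne' hsum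
end

section
/- Let b_1, …, b_n ∈ ℂ and let (z_1, …, z_n) be the (unique up to permutation) solution of the system z_1^j + ⋯ + z_n^j = b_j for 1 ≤ j ≤ n. Then for every i, |z_i| ≤ C_n · M, where C_n = 1/sin(π/(2n)) and M = max_{1 ≤ j ≤ n} |b_j|^{1/j}. -/
/-!
With `p_j = ∑ i, z i ^ j`, the hypotheses give `‖p_j‖ ≤ M ^ j`, and Newton's identities
`k e_k = ± ∑_{i<k} ± e_i p_{k-i}` then give `‖e_k‖ ≤ M ^ k` by induction. Each `z i` is a root of
`∏ j, (X - z j)`, whose coefficients are `± e_{n-k}`, so `r = ‖z i‖` satisfies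
`r ^ n ≤ ∑_{k<n} M ^ (n-k) r ^ k`; this forces `r ≤ M / s` whenever `s > 0` and
`s + s ^ 2 + ⋯ + s ^ n ≤ 1`. The constant `s = sin (π / (2n))` qualifies for `n = 1` (`s = 1`)
and for `n ≥ 3` (`s ≤ 1/2`). For `n = 2` it does not, and there `(z₁ - z₂)² = 2 p₂ - p₁²`
gives the bound `√2 M` directly.
-/

open Finset Polynomial Real

section Newton

variable {σ : Type*} [Fintype σ]

theorem natCast_mul_esymm_map_eq_sum {R : Type*} [CommRing R] (z : σ → R) (k : ℕ) :
    (k : R) * (univ.val.map z).esymm k = (-1) ^ (k + 1) *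
      ∑ a ∈ antidiagonal k with a.1 < k,
        (-1) ^ a.1 * (univ.val.map z).esymm a.1 * ∑ i, z i ^ a.2 := by
  simpa [MvPolynomial.psum, map_sum, MvPolynomial.aeval_esymm_eq_multiset_esymm,
    -MvPolynomial.coe_aeval_eq_eval, -MvPolynomial.aeval_eq_eval] using
    congrArg (MvPolynomial.aeval z) (MvPolynomial.mul_esymm_eq_sum σ R k)

theorem card_filter_fst_lt_antidiagonal (k : ℕ) : #{a ∈ antidiagonal k | a.1 < k} = k := by
  have : {a ∈ antidiagonal k | a.1 < k} = (antidiagonal k).erase (k, 0) := by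
    ext ⟨i, j⟩
    simp only [mem_filter, HasAntidiagonal.mem_antidiagonal, mem_erase, ne_eq, Prod.mk.injEq,
      not_and]
    omega
  simp [this]

/-- Each term of Newton's identity for `k * e_k` is at most `M ^ k`, and there are `k` of them. -/
theorem norm_esymm_map_le_of_norm_psum_le {𝕜 : Type*} [RCLike 𝕜] (z : σ → 𝕜) {M : ℝ}
    (hM : 0 ≤ M) {n : ℕ} (hp : ∀ j ∈ Icc 1 n, ‖∑ i, z i ^ j‖ ≤ M ^ j) :
    ∀ k ≤ n, ‖(univ.val.map z).esymm k‖ ≤ M ^ k := by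
  intro k
  induction k using Nat.strong_induction_on with
  | _ k ih =>
    intro hkn
    obtain rfl | hk := k.eq_zero_or_pos
    · simp [Multiset.esymm]
    have hterm : ∀ a ∈ {a ∈ antidiagonal k | a.1 < k},
        ‖(-1) ^ a.1 * (univ.val.map z).esymm a.1 * ∑ i, z i ^ a.2‖ ≤ M ^ k := by
      intro a ha
      rw [mem_filter, HasAntidiagonal.mem_antidiagonal] at ha
      rw [norm_mul, norm_mul, norm_pow, norm_neg, norm_one, one_pow, one_mul, ← ha.1, pow_add]
      exact mul_le_mul (ih a.1 ha.2 (by omega)) (hp a.2 (mem_Icc.2 ⟨by omega, by omega⟩))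
        (norm_nonneg _) (pow_nonneg hM _)
    have hsum : (k : ℝ) * ‖(univ.val.map z).esymm k‖ ≤ k * M ^ k := by
      calc (k : ℝ) * ‖(univ.val.map z).esymm k‖
          = ‖∑ a ∈ antidiagonal k with a.1 < k,
              (-1) ^ a.1 * (univ.val.map z).esymm a.1 * ∑ i, z i ^ a.2‖ := by
            rw [← RCLike.norm_natCast (K := 𝕜), ← norm_mul, natCast_mul_esymm_map_eq_sum,
              norm_mul, norm_pow, norm_neg, norm_one, one_pow, one_mul]
        _ ≤ ∑ a ∈ antidiagonal k with a.1 < k, M ^ k := norm_sum_le_of_le _ hterm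
        _ = k * M ^ k := by rw [sum_const, card_filter_fst_lt_antidiagonal, nsmul_eq_mul]
    exact le_of_mul_le_mul_left hsum (by exact_mod_cast hk)

end Newton

theorem Polynomial.Monic.norm_pow_natDegree_le_of_isRoot {𝕜 : Type*} [NormedField 𝕜]
    {p : 𝕜[X]} (hp : p.Monic) {x : 𝕜} (hx : p.IsRoot x) :
    ‖x‖ ^ p.natDegree ≤ ∑ k ∈ range p.natDegree, ‖p.coeff k‖ * ‖x‖ ^ k := by
  have heval := hx.eq_zero
  rw [eval_eq_sum_range, sum_range_succ, hp.coeff_natDegree, one_mul,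
    add_eq_zero_iff_neg_eq'] at heval
  calc ‖x‖ ^ p.natDegree = ‖∑ k ∈ range p.natDegree, p.coeff k * x ^ k‖ := by
        rw [← norm_pow, ← heval, norm_neg]
    _ ≤ ∑ k ∈ range p.natDegree, ‖p.coeff k‖ * ‖x‖ ^ k := by
        simpa only [norm_mul, norm_pow] using
          norm_sum_le (range p.natDegree) fun k => p.coeff k * x ^ k

theorem Multiset.norm_pow_card_le_of_norm_esymm_le {𝕜 : Type*} [NormedField 𝕜]
    {s : Multiset 𝕜} {M : ℝ} (hE : ∀ k ≤ s.card, ‖s.esymm k‖ ≤ M ^ k) {x : 𝕜} (hx : x ∈ s) :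
    ‖x‖ ^ s.card ≤ ∑ k ∈ Finset.range s.card, M ^ (s.card - k) * ‖x‖ ^ k := by
  set p := (s.map fun t => X - C t).prod
  have hmonic : p.Monic := monic_multiset_prod_of_monic _ _ fun t _ => monic_X_sub_C t
  have hroot : p.IsRoot x := by
    rw [IsRoot, eval_multiset_prod, Multiset.map_map]
    exact Multiset.prod_eq_zero (Multiset.mem_map.2 ⟨x, hx, by simp⟩)
  calc ‖x‖ ^ s.card ≤ ∑ k ∈ Finset.range s.card, ‖p.coeff k‖ * ‖x‖ ^ k := by
        simpa only [p, natDegree_multiset_prod_X_sub_C_eq_card] using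
          hmonic.norm_pow_natDegree_le_of_isRoot hroot
    _ ≤ ∑ k ∈ Finset.range s.card, M ^ (s.card - k) * ‖x‖ ^ k := by
        gcongr with k hk
        rw [Multiset.prod_X_sub_C_coeff s (mem_range.1 hk).le, norm_mul, norm_pow, norm_neg,
          norm_one, one_pow, one_mul]
        exact hE _ tsub_le_self

theorem sum_range_pow_sub_le_one {s : ℝ} (hs₀ : 0 ≤ s) (hs : s ≤ 1 / 2) (n : ℕ) :
    ∑ k ∈ range n, s ^ (n - k) ≤ 1 := by
  have hreflect : ∑ k ∈ range n, s ^ (n - k) = s * ∑ k ∈ Ico 0 n, s ^ k := by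
    rw [← sum_range_reflect, mul_sum, ← range_eq_Ico]
    refine sum_congr rfl fun k hk => ?_
    rw [← pow_succ']; congr 1; have := mem_range.1 hk; omega
  calc ∑ k ∈ range n, s ^ (n - k) ≤ s * (s ^ 0 / (1 - s)) := by
        rw [hreflect]; gcongr; exact geom_sum_Ico_le_of_lt_one hs₀ (by linarith)
    _ ≤ 1 := by rw [pow_zero, mul_one_div, div_le_one (by linarith)]; linarith

theorem le_div_of_pow_le_sum {n : ℕ} {r M s : ℝ} (hM : 0 ≤ M) (hs : 0 < s)
    (hgeom : ∑ k ∈ range n, s ^ (n - k) ≤ 1)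
    (hr : r ^ n ≤ ∑ k ∈ range n, M ^ (n - k) * r ^ k) : r ≤ M / s := by
  obtain rfl | hn := n.eq_zero_or_pos
  · norm_num at hr
  by_contra! hlt
  have hMrs : M < r * s := (div_lt_iff₀ hs).1 hlt
  have hr₀ : 0 < r := (div_nonneg hM hs.le).trans_lt hlt
  have hterm : ∀ k ∈ range n, M ^ (n - k) * r ^ k < s ^ (n - k) * r ^ n := by
    intro k hk
    calc M ^ (n - k) * r ^ k < (r * s) ^ (n - k) * r ^ k := by
          gcongr; have := mem_range.1 hk; omega
      _ = s ^ (n - k) * r ^ n := by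
          rw [mul_pow, mul_right_comm, ← pow_add, Nat.sub_add_cancel (mem_range.1 hk).le,
            mul_comm]
  have := calc r ^ n ≤ ∑ k ∈ range n, M ^ (n - k) * r ^ k := hr
    _ < ∑ k ∈ range n, s ^ (n - k) * r ^ n :=
        sum_lt_sum_of_nonempty (nonempty_range_iff.2 hn.ne') hterm
    _ = (∑ k ∈ range n, s ^ (n - k)) * r ^ n := by rw [sum_mul]
    _ ≤ r ^ n := mul_le_of_le_one_left (by positivity) hgeom
  exact this.false

theorem sum_range_sin_pi_div_pow_le_one {n : ℕ} (hn : n ≠ 2) :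
    ∑ k ∈ range n, sin (π / (2 * n)) ^ (n - k) ≤ 1 := by
  obtain rfl | rfl | hn3 : n = 0 ∨ n = 1 ∨ 3 ≤ n := by omega
  · simp
  · simp
  have hpos : 0 < π / (2 * n) := by positivity
  have hle : π / (2 * n) ≤ π / 6 := by
    gcongr; have : (3 : ℝ) ≤ n := by exact_mod_cast hn3
    linarith
  refine sum_range_pow_sub_le_one
    (sin_nonneg_of_nonneg_of_le_pi hpos.le (by linarith [pi_pos])) ?_ n
  calc sin (π / (2 * n)) ≤ sin (π / 6) :=
        sin_le_sin_of_le_of_le_pi_div_two (by linarith) (by linarith [pi_pos]) hle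
    _ = 1 / 2 := sin_pi_div_six

theorem norm_le_sqrt_two_mul_of_norm_add_le {𝕜 : Type*} [RCLike 𝕜] {x y : 𝕜} {M : ℝ}
    (h₁ : ‖x + y‖ ≤ M) (h₂ : ‖x ^ 2 + y ^ 2‖ ≤ M ^ 2) : ‖x‖ ≤ √2 * M := by
  have hM : 0 ≤ M := (norm_nonneg _).trans h₁
  have hdiff : ‖x - y‖ ^ 2 ≤ 2 * M ^ 2 + ‖x + y‖ ^ 2 := by
    calc ‖x - y‖ ^ 2 = ‖2 * (x ^ 2 + y ^ 2) - (x + y) ^ 2‖ := by rw [← norm_pow]; ring_nf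
      _ ≤ 2 * M ^ 2 + ‖x + y‖ ^ 2 := by
        refine (norm_sub_le _ _).trans ?_
        rw [norm_mul, RCLike.norm_two, norm_pow]; linarith
  have hsum : 2 * ‖x‖ ≤ ‖x + y‖ + ‖x - y‖ := by
    calc 2 * ‖x‖ = ‖(x + y) + (x - y)‖ := by
          rw [← RCLike.norm_two (K := 𝕜), ← norm_mul]; ring_nf
      _ ≤ ‖x + y‖ + ‖x - y‖ := norm_add_le _ _
  refine le_of_pow_le_pow_left₀ two_ne_zero (by positivity) ?_
  rw [mul_pow, sq_sqrt zero_le_two]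
  nlinarith [sq_nonneg (‖x + y‖ - ‖x - y‖), pow_le_pow_left₀ (by positivity) hsum 2,
    pow_le_pow_left₀ (norm_nonneg _) h₁ 2]

theorem norm_le_sqrt_two_mul_of_norm_psum_le {𝕜 : Type*} [RCLike 𝕜] (z : Fin 2 → 𝕜) {M : ℝ}
    (hp : ∀ j ∈ Icc 1 2, ‖∑ i, z i ^ j‖ ≤ M ^ j) (i : Fin 2) : ‖z i‖ ≤ √2 * M := by
  have h₁ := hp 1 (by simp)
  have h₂ := hp 2 (by simp)
  simp only [Fin.sum_univ_two, pow_one] at h₁ h₂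
  fin_cases i
  · exact norm_le_sqrt_two_mul_of_norm_add_le h₁ h₂
  · exact norm_le_sqrt_two_mul_of_norm_add_le (by rwa [add_comm]) (by rwa [add_comm])

theorem norm_le_div_of_norm_psum_le {σ 𝕜 : Type*} [Fintype σ] [RCLike 𝕜] (z : σ → 𝕜) {M s : ℝ}
    (hM : 0 ≤ M) (hp : ∀ j ∈ Icc 1 (Fintype.card σ), ‖∑ i, z i ^ j‖ ≤ M ^ j) (hs : 0 < s)
    (hgeom : ∑ k ∈ range (Fintype.card σ), s ^ (Fintype.card σ - k) ≤ 1) (i : σ) :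
    ‖z i‖ ≤ M / s := by
  have hcard : (univ.val.map z).card = Fintype.card σ := by simp
  have hE : ∀ k ≤ (univ.val.map z).card, ‖(univ.val.map z).esymm k‖ ≤ M ^ k := fun k hk =>
    norm_esymm_map_le_of_norm_psum_le z hM hp k (hcard ▸ hk)
  refine le_div_of_pow_le_sum hM hs hgeom ?_
  simpa only [hcard] using
    Multiset.norm_pow_card_le_of_norm_esymm_le hE (Multiset.mem_map_of_mem z (mem_univ_val i))

theorem powerSum_solution_bound_general (n : ℕ) (b : Fin n → ℂ)
    (z : Fin n → ℂ) (h : ∀ j : Fin n, ∑ i, z i ^ (j.1 + 1) = b j)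
    (M : ℝ)
    (hM : IsGreatest (Set.range fun j : Fin n =>
      ‖b j‖ ^ ((1 : ℝ) / (j.1 + 1))) M) :
    ∀ i, ‖z i‖ ≤ M / Real.sin (Real.pi / (2 * n)) := by
  intro i
  have hM₀ : 0 ≤ M := (rpow_nonneg (norm_nonneg _) _).trans (hM.2 ⟨i, rfl⟩)
  have hp : ∀ j ∈ Icc 1 n, ‖∑ i, z i ^ j‖ ≤ M ^ j := by
    intro j hj
    obtain ⟨m, rfl⟩ : ∃ m, j = m + 1 := ⟨j - 1, by grind⟩
    have hm : m < n := by grind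
    have hbm : ‖b ⟨m, hm⟩‖ ^ (1 / ((m : ℝ) + 1)) ≤ M := hM.2 ⟨_, rfl⟩
    rw [one_div, rpow_inv_le_iff_of_pos (norm_nonneg _) hM₀ (by positivity)] at hbm
    rw [h ⟨m, hm⟩]
    exact_mod_cast hbm
  obtain rfl | hn2 := eq_or_ne n 2
  · rw [show π / (2 * (2 : ℕ)) = π / 4 by norm_num, sin_pi_div_four, div_div_eq_mul_div,
      mul_div_assoc, div_sqrt, mul_comm]
    exact norm_le_sqrt_two_mul_of_norm_psum_le z hp i
  have hs : 0 < sin (π / (2 * n)) := by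
    have : (1 : ℝ) < 2 * n := by have := i.pos; norm_cast; omega
    exact sin_pos_of_pos_of_lt_pi (by positivity) (div_lt_self pi_pos this)
  exact norm_le_div_of_norm_psum_le z hM₀ (by simpa using hp) hs
    (by simpa using sum_range_sin_pi_div_pow_le_one hn2) i

/-- Any solution of z_1^j + ⋯ + z_n^j = b_j, 1 ≤ j ≤ n, satisfies
|z_i| ≤ C_n · M with C_n = 1/sin(π/(2n)) and M = max_j |b_j|^{1/j}. -/
theorem powerSum_solution_bound (n : ℕ) (hn : 1 ≤ n) (b : Fin n → ℂ)
    (z : Fin n → ℂ) (h : ∀ j : Fin n, ∑ i, z i ^ (j.1 + 1) = b j)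
    (M : ℝ)
    (hM : IsGreatest (Set.range fun j : Fin n =>
      ‖b j‖ ^ ((1 : ℝ) / (j.1 + 1))) M) :
    ∀ i, ‖z i‖ ≤ M / Real.sin (Real.pi / (2 * n)) :=
  powerSum_solution_bound_general n b z h M hM
end

section
/- Every monic complex polynomial f(z) = z^n + a_{n-1}z^{n-1} + ⋯ + a_1 z + a_0 of degree n can be written as f(z) = (1/n) Σ_{i=1}^n (z - z_i)^n for some complex numbers z_1, …, z_n, and these numbers are uniquely determined up to their order. -/
/-!
Comparing coefficients (the binomial coefficients `n.choose k` are nonzero), the identity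
`f = (1/n) ∑ (X - z_i)^n` says exactly that the power sums `p_k = ∑ z_i^k`, `1 ≤ k ≤ n`, take
values read off from the coefficients of `f`. In characteristic zero Newton's identities
`k e_k = ∑ ± e_{k-i} p_i` are a triangular system with invertible diagonal, so the first `n`
power sums and the first `n` elementary symmetric functions determine each other. Prescribed
elementary symmetric functions are those of the roots of the monic polynomial with the
corresponding coefficients (`ℂ` is algebraically closed), and they determine the multiset of
roots, hence the `z_i` up to order.
-/

open Polynomial Finset

theorem Multiset.exists_fin_univ_map_eq {α : Type*} {n : ℕ} (s : Multiset α)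
    (hs : card s = n) : ∃ z : Fin n → α, univ.val.map z = s := by
  subst hs
  refine ⟨fun i => s.toList[i.cast s.length_toList.symm], ?_⟩
  rw [Fin.univ_val_map, List.ofFn_congr s.length_toList.symm]
  exact (congrArg _ List.ofFn_getElem).trans s.coe_toList

theorem exists_perm_of_univ_map_eq {ι α : Type*} [Fintype ι] {z w : ι → α}
    (h : univ.val.map w = univ.val.map z) : ∃ σ : Equiv.Perm ι, w = z ∘ σ := by
  classical
  have hfiber (a : α) : Fintype.card {i // w i = a} = Fintype.card {i // z i = a} := by
    have := congrArg (Multiset.count a) h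
    simp only [Multiset.count_map, eq_comm (a := a)] at this
    rwa [Fintype.card_subtype, Fintype.card_subtype]
  exact ⟨Equiv.ofFiberEquiv fun a => Fintype.equivOfCardEq (hfiber a),
    funext fun i => (Equiv.ofFiberEquiv_map _ i).symm⟩

theorem Finset.Nat.sum_antidiagonal_fst_lt_eq_sum_range {M : Type*} [AddCommMonoid M]
    (f : ℕ → ℕ → M) (k : ℕ) :
    ∑ a ∈ antidiagonal k with a.1 < k, f a.1 a.2 = ∑ i ∈ range k, f i (k - i) := by
  rw [sum_filter, Nat.sum_antidiagonal_eq_sum_range_succ (fun i j => if i < k then f i j else 0),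
    sum_range_succ, if_neg (lt_irrefl k), add_zero]
  exact sum_congr rfl fun i hi => if_pos (mem_range.mp hi)

/-- Newton's identities `k e_k = ∑_{i=1}^k (-1)^(i-1) e_(k-i) p_i`, with `e_0 = 1`. -/
def NewtonIdentities {R : Type*} [CommRing R] (e p : ℕ → R) : Prop :=
  e 0 = 1 ∧ ∀ k : ℕ, ((k + 1 : ℕ) : R) * e (k + 1) =
    (-1) ^ k * ∑ i ∈ range (k + 1), (-1) ^ i * e i * p (k + 1 - i)

namespace NewtonIdentities

variable {R : Type*} [CommRing R] {e p e' p' : ℕ → R}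

theorem mul_sub_eq (h : NewtonIdentities e p) (h' : NewtonIdentities e' p') {n : ℕ}
    (he : ∀ k < n, e (k + 1) = e' (k + 1)) (hp : ∀ k < n, p (k + 1) = p' (k + 1)) :
    ((n + 1 : ℕ) : R) * (e (n + 1) - e' (n + 1)) = (-1) ^ n * (p (n + 1) - p' (n + 1)) := by
  have hsum : ∑ i ∈ range n, (-1) ^ (i + 1) * e (i + 1) * p (n + 1 - (i + 1)) =
      ∑ i ∈ range n, (-1) ^ (i + 1) * e' (i + 1) * p' (n + 1 - (i + 1)) := by
    refine sum_congr rfl fun i hi => ?_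
    have hi := mem_range.mp hi
    rw [he i hi, show n + 1 - (i + 1) = n - i - 1 + 1 by omega, hp _ (by omega)]
  rw [mul_sub, h.2, h'.2, sum_range_succ', sum_range_succ', hsum, h.1, h'.1, Nat.sub_zero]
  ring

theorem forall_eq_iff [NoZeroDivisors R] [CharZero R] (h : NewtonIdentities e p)
    (h' : NewtonIdentities e' p') (n : ℕ) :
    (∀ k < n, e (k + 1) = e' (k + 1)) ↔ ∀ k < n, p (k + 1) = p' (k + 1) := by
  induction n with
  | zero => simp
  | succ n ih =>
    simp only [Nat.forall_lt_succ_right]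
    constructor
    · rintro ⟨he, hlast⟩
      have hp := ih.mp he
      have hdiff := h.mul_sub_eq h' he hp
      rw [hlast, sub_self, mul_zero, eq_comm, mul_eq_zero] at hdiff
      exact ⟨hp, sub_eq_zero.mp (hdiff.resolve_left (pow_ne_zero _ (neg_ne_zero.mpr one_ne_zero)))⟩
    · rintro ⟨hp, hlast⟩
      have he := ih.mpr hp
      have hdiff := h.mul_sub_eq h' he hp
      rw [hlast, sub_self, mul_zero, mul_eq_zero] at hdiff
      exact ⟨he, sub_eq_zero.mp (hdiff.resolve_left (Nat.cast_ne_zero.mpr n.succ_ne_zero))⟩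

end NewtonIdentities

theorem Multiset.newtonIdentities {R : Type*} [CommRing R] (s : Multiset R) :
    NewtonIdentities s.esymm (fun k => (s.map (· ^ k)).sum) := by
  obtain ⟨n, hn⟩ : ∃ n, card s = n := ⟨_, rfl⟩
  obtain ⟨z, rfl⟩ := s.exists_fin_univ_map_eq hn
  refine ⟨by simp [Multiset.esymm], fun k => ?_⟩
  have h := congrArg (MvPolynomial.aeval z) (MvPolynomial.mul_esymm_eq_sum (Fin n) R (k + 1))
  simp only [map_mul, map_pow, map_neg, map_one, map_natCast, map_sum,
    MvPolynomial.aeval_esymm_eq_multiset_esymm, MvPolynomial.psum, MvPolynomial.aeval_X] at h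
  rw [h, Nat.sum_antidiagonal_fst_lt_eq_sum_range
    (fun i j => (-1) ^ i * (univ.val.map z).esymm i * ∑ x, z x ^ j)]
  simp only [Multiset.map_map, Function.comp_def, sum_map_val]
  ring

noncomputable def esymmOfPsum {K : Type*} [Field K] (p : ℕ → K) : ℕ → K
  | 0 => 1
  | k + 1 => (-1) ^ k / (k + 1 : ℕ) *
      ∑ i : Fin (k + 1), (-1) ^ (i : ℕ) * esymmOfPsum p i * p (k + 1 - i)

theorem newtonIdentities_esymmOfPsum {K : Type*} [Field K] [CharZero K] (p : ℕ → K) :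
    NewtonIdentities (esymmOfPsum p) p := by
  refine ⟨by rw [esymmOfPsum], fun k => ?_⟩
  rw [esymmOfPsum,
    Fin.sum_univ_eq_sum_range (fun i => (-1) ^ i * esymmOfPsum p i * p (k + 1 - i))]
  field_simp

theorem exists_monic_natDegree_eq_coeff_eq {R : Type*} [CommRing R] [Nontrivial R] (n : ℕ)
    (c : ℕ → R) : ∃ g : R[X], g.Monic ∧ g.natDegree = n ∧ ∀ i < n, g.coeff i = c i := by
  have hlt : (∑ i ∈ range n, C (c i) * X ^ i).degree < (n : WithBot ℕ) := by
    rw [← Fin.sum_univ_eq_sum_range (fun i => C (c i) * X ^ i)]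
    exact degree_sum_fin_lt _
  refine ⟨X ^ n + ∑ i ∈ range n, C (c i) * X ^ i, monic_X_pow_add hlt, ?_, fun i hi => ?_⟩
  · rw [natDegree_add_eq_left_of_degree_lt (by rwa [degree_X_pow]), natDegree_X_pow]
  · simp [hi, hi.ne]

theorem Multiset.exists_card_eq_esymm_eq {K : Type*} [Field K] [IsAlgClosed K] (n : ℕ)
    (e : ℕ → K) : ∃ s : Multiset K, card s = n ∧ ∀ k < n, s.esymm (k + 1) = e (k + 1) := by
  obtain ⟨g, hg, hdeg, hcoeff⟩ :=
    exists_monic_natDegree_eq_coeff_eq n fun i => (-1) ^ (n - i) * e (n - i)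
  have hroots : card g.roots = g.natDegree := splits_iff_card_roots.mp (IsAlgClosed.splits g)
  refine ⟨g.roots, hroots.trans hdeg, fun k hk => ?_⟩
  have hvieta := coeff_eq_esymm_roots_of_card hroots (k := n - (k + 1)) (by omega)
  rw [hcoeff _ (by omega), hg.leadingCoeff, hdeg, Nat.sub_sub_self hk, one_mul] at hvieta
  exact (mul_left_cancel₀ (pow_ne_zero _ (neg_ne_zero.mpr one_ne_zero)) hvieta).symm

theorem Multiset.eq_of_esymm_eq {R : Type*} [CommRing R] [IsDomain R] {s t : Multiset R} {n : ℕ}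
    (hs : card s = n) (ht : card t = n) (h : ∀ k < n, s.esymm (k + 1) = t.esymm (k + 1)) :
    s = t := by
  have hprod : (s.map fun a => X - C a).prod = (t.map fun a => X - C a).prod := by
    rw [prod_X_sub_X_eq_sum_esymm, prod_X_sub_X_eq_sum_esymm, hs, ht]
    refine sum_congr rfl fun j hj => ?_
    rcases j with _ | k
    · simp [Multiset.esymm]
    · rw [h k (by simpa using hj)]
  simpa using congrArg roots hprod

theorem exists_fin_psum_eq {K : Type*} [Field K] [IsAlgClosed K] [CharZero K] (n : ℕ)
    (p : ℕ → K) : ∃ z : Fin n → K, ∀ k < n, ∑ i, z i ^ (k + 1) = p (k + 1) := by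
  obtain ⟨s, hs, he⟩ := Multiset.exists_card_eq_esymm_eq n (esymmOfPsum p)
  obtain ⟨z, rfl⟩ := s.exists_fin_univ_map_eq hs
  have hp := (Multiset.newtonIdentities _).forall_eq_iff (newtonIdentities_esymmOfPsum p) n |>.mp he
  exact ⟨z, by simpa only [Multiset.map_map, Function.comp_def, sum_map_val] using hp⟩

theorem exists_perm_of_psum_eq {R ι : Type*} [CommRing R] [IsDomain R] [CharZero R] [Fintype ι]
    {z w : ι → R} (h : ∀ k < Fintype.card ι, ∑ i, w i ^ (k + 1) = ∑ i, z i ^ (k + 1)) :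
    ∃ σ : Equiv.Perm ι, w = z ∘ σ := by
  refine exists_perm_of_univ_map_eq (Multiset.eq_of_esymm_eq (n := Fintype.card ι)
    (by simp) (by simp) ?_)
  refine (Multiset.newtonIdentities _).forall_eq_iff (Multiset.newtonIdentities _) _ |>.mpr ?_
  simpa only [Multiset.map_map, Function.comp_def, sum_map_val] using h

theorem coeff_sum_X_sub_C_pow {R ι : Type*} [CommRing R] (s : Finset ι) (z : ι → R) (n j : ℕ) :
    (∑ i ∈ s, (X - C (z i)) ^ n).coeff j =
      n.choose j * (-1) ^ (n - j) * ∑ i ∈ s, z i ^ (n - j) := by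
  rw [finsetSum_coeff, mul_sum]
  refine sum_congr rfl fun i _ => ?_
  rw [sub_eq_add_neg, ← C_neg, coeff_X_add_C_pow, neg_pow]
  ring

theorem eq_C_inv_mul_sum_X_sub_C_pow_iff {K : Type*} [Field K] [CharZero K] {n : ℕ} (hn : n ≠ 0)
    {f : K[X]} (hf : f.Monic) (hdeg : f.natDegree = n) (z : Fin n → K) :
    f = C (n : K)⁻¹ * ∑ i, (X - C (z i)) ^ n ↔
      ∀ k < n, ∑ i, z i ^ (k + 1) =
        (-1) ^ (k + 1) * n * f.coeff (n - (k + 1)) / n.choose (k + 1) := by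
  have hcoeff (j : ℕ) : (C (n : K)⁻¹ * ∑ i, (X - C (z i)) ^ n).coeff j =
      (n : K)⁻¹ * (n.choose j * (-1) ^ (n - j) * ∑ i, z i ^ (n - j)) := by
    rw [coeff_C_mul, coeff_sum_X_sub_C_pow]
  have hn' : (n : K) ≠ 0 := Nat.cast_ne_zero.mpr hn
  have key (k : ℕ) (hk : k < n) :
      f.coeff (n - (k + 1)) = (C (n : K)⁻¹ * ∑ i, (X - C (z i)) ^ n).coeff (n - (k + 1)) ↔
        ∑ i, z i ^ (k + 1) = (-1) ^ (k + 1) * n * f.coeff (n - (k + 1)) / n.choose (k + 1) := by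
    have hc : (n.choose (k + 1) : K) ≠ 0 := Nat.cast_ne_zero.mpr (Nat.choose_pos hk).ne'
    have hsign : ((-1 : K) ^ (k + 1)) ^ 2 = 1 := by rw [← pow_mul, pow_mul', neg_one_sq, one_pow]
    rw [hcoeff, Nat.choose_symm (k := k + 1) hk, Nat.sub_sub_self (m := k + 1) hk,
      eq_div_iff hc, eq_inv_mul_iff_mul_eq₀ hn']
    constructor <;> intro h
    · linear_combination (-(-1) ^ (k + 1)) * h - n.choose (k + 1) * (∑ i, z i ^ (k + 1)) * hsign
    · linear_combination (-(-1) ^ (k + 1)) * h - n * f.coeff (n - (k + 1)) * hsign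
  constructor
  · intro h k hk
    exact (key k hk).mp (congrArg (coeff · (n - (k + 1))) h)
  · intro h
    ext j
    rcases lt_trichotomy j n with hj | hj | hj
    · rw [show j = n - (n - j - 1 + 1) by omega]
      exact (key _ (by omega)).mpr (h _ (by omega))
    · have hlead : f.coeff n = 1 := hdeg ▸ hf.coeff_natDegree
      rw [hj, hcoeff, hlead]
      simp [hn']
    · rw [hcoeff, coeff_eq_zero_of_natDegree_lt (hdeg ▸ hj), Nat.choose_eq_zero_of_lt hj]
      simp

/-- Every monic complex polynomial of degree n is the average (1/n) Σ (X - z_i)^n,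
with z_1, …, z_n unique up to order. -/
theorem monic_eq_average_of_powers (n : ℕ) (hn : 1 ≤ n)
    (f : Polynomial ℂ) (hf : f.Monic) (hdeg : f.natDegree = n) :
    ∃ z : Fin n → ℂ,
      f = Polynomial.C ((n : ℂ)⁻¹) * ∑ i, (Polynomial.X - Polynomial.C (z i)) ^ n ∧
      ∀ w : Fin n → ℂ,
        f = Polynomial.C ((n : ℂ)⁻¹) * ∑ i, (Polynomial.X - Polynomial.C (w i)) ^ n →
        ∃ σ : Equiv.Perm (Fin n), w = z ∘ σ := by
  have hrep := eq_C_inv_mul_sum_X_sub_C_pow_iff (Nat.one_le_iff_ne_zero.mp hn) hf hdeg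
  obtain ⟨z, hz⟩ := exists_fin_psum_eq n fun k => (-1) ^ k * n * f.coeff (n - k) / n.choose k
  refine ⟨z, (hrep z).mpr hz, fun w hw => exists_perm_of_psum_eq fun k hk => ?_⟩
  rw [Fintype.card_fin] at hk
  exact ((hrep w).mp hw k hk).trans (hz k hk).symm
end

section
/- The sequence defined by D_1 = 1 and D_{n+1} = 1 + (1 + D_n^{n+1})^{1/(n+1)} satisfies lim_{n→∞} D_n / n = 1. -/
/-!
Both bounds come from comparing `(1 + x ^ m) ^ (1 / m)` with `x`: it is at least `x`, and by
Bernoulli's inequality at most `x + 1 / (m x ^ (m - 1))`. Hence `n ≤ D n`, and the increments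
`D (n + 1) - D n - 1 ≤ 1 / ((n + 1) D n ^ n) ≤ 1 / n - 1 / (n + 1)` telescope to `D n ≤ n + 1`.
-/

open Filter Topology

lemma le_rpow_one_div_one_add_pow {x : ℝ} (hx : 0 ≤ x) (m : ℕ) :
    x ≤ (1 + x ^ (m + 1)) ^ ((1 : ℝ) / (m + 1)) := by
  rw [one_div, Real.le_rpow_inv_iff_of_pos hx (by positivity) (by positivity), ← Nat.cast_add_one,
    Real.rpow_natCast]
  linarith

lemma rpow_one_div_one_add_pow_le {x : ℝ} (hx : 0 < x) (m : ℕ) :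
    (1 + x ^ (m + 1)) ^ ((1 : ℝ) / (m + 1)) ≤ x + 1 / ((m + 1) * x ^ m) := by
  rw [one_div, Real.rpow_inv_le_iff_of_pos (by positivity) (by positivity) (by positivity),
    ← Nat.cast_add_one, Real.rpow_natCast]
  calc 1 + x ^ (m + 1)
      = x ^ (m + 1) + ((m + 1 : ℕ) : ℝ) * x ^ (m + 1 - 1) * (1 / ((m + 1 : ℕ) * x ^ m)) := by
        rw [Nat.add_sub_cancel]
        field_simp
        ring
    _ ≤ _ := pow_add_mul_le_add_pow hx.le (by positivity) _

lemma tendsto_div_natCast_of_le_of_le_add {u : ℕ → ℝ} {c : ℝ}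
    (h : ∀ᶠ n : ℕ in atTop, (n : ℝ) ≤ u n ∧ u n ≤ n + c) :
    Tendsto (fun n : ℕ => u n / n) atTop (𝓝 1) := by
  have hupper : Tendsto (fun n : ℕ => 1 + c * (1 / (n : ℝ))) atTop (𝓝 1) := by
    simpa using tendsto_one_div_atTop_nhds_zero_nat.const_mul c |>.const_add 1
  have hpos : ∀ᶠ n : ℕ in atTop, (0 : ℝ) < n :=
    (eventually_gt_atTop 0).mono fun n hn => Nat.cast_pos.mpr hn
  refine tendsto_of_tendsto_of_tendsto_of_le_of_le' tendsto_const_nhds hupper ?_ ?_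
  · filter_upwards [h, hpos] with n ⟨hlow, _⟩ hn
    exact (one_le_div₀ hn).mpr hlow
  · filter_upwards [h, hpos] with n ⟨_, hup⟩ hn
    rw [div_le_iff₀ hn]
    field_simp
    linarith

lemma natCast_le_D {D : ℕ → ℝ} (hD1 : D 1 = 1)
    (hDrec : ∀ n, 1 ≤ n → D (n + 1) = 1 + (1 + D n ^ (n + 1)) ^ ((1 : ℝ) / (n + 1)))
    {n : ℕ} (hn : 1 ≤ n) : (n : ℝ) ≤ D n := by
  induction n, hn using Nat.le_induction with
  | base => simp [hD1]
  | succ n hn ih =>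
    have := le_rpow_one_div_one_add_pow (le_trans n.cast_nonneg ih) n
    rw [hDrec n hn]
    push_cast
    linarith

lemma D_add_inv_le {D : ℕ → ℝ} (hD1 : D 1 = 1)
    (hDrec : ∀ n, 1 ≤ n → D (n + 1) = 1 + (1 + D n ^ (n + 1)) ^ ((1 : ℝ) / (n + 1)))
    {n : ℕ} (hn : 1 ≤ n) : D n + 1 / n ≤ n + 1 := by
  induction n, hn using Nat.le_induction with
  | base => simp [hD1]
  | succ n hn ih =>
    have hn₀ : (0 : ℝ) < n := Nat.cast_pos.mpr hn
    have hD : (n : ℝ) ≤ D n := natCast_le_D hD1 hDrec hn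
    have hstep := rpow_one_div_one_add_pow_le (hn₀.trans_le hD) n
    have hpow : D n ≤ D n ^ n := le_self_pow₀ (le_trans (Nat.one_le_cast.mpr hn) hD) (by omega)
    have herr : (1 : ℝ) / ((n + 1) * D n ^ n) ≤ 1 / n - 1 / (n + 1) :=
      calc (1 : ℝ) / ((n + 1) * D n ^ n)
          ≤ 1 / ((n + 1) * n) := by gcongr; exact hD.trans hpow
        _ = 1 / n - 1 / (n + 1) := by field_simp; ring
    rw [hDrec n hn]
    push_cast
    linarith

/-- For the sequence D_1 = 1, D_{n+1} = 1 + (1 + D_n^{n+1})^{1/(n+1)},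
we have lim_{n→∞} D_n / n = 1. -/
theorem D_div_n_tendsto_one (D : ℕ → ℝ) (hD1 : D 1 = 1)
    (hDrec : ∀ n, 1 ≤ n → D (n + 1) = 1 + (1 + D n ^ (n + 1)) ^ ((1 : ℝ) / (n + 1))) :
    Tendsto (fun n : ℕ => D n / n) atTop (nhds 1) := by
  refine tendsto_div_natCast_of_le_of_le_add (c := 1) ?_
  filter_upwards [eventually_ge_atTop (1 : ℕ)] with n hn
  have hinv : (0 : ℝ) ≤ 1 / n := by positivity
  exact ⟨natCast_le_D hD1 hDrec hn, by linarith [D_add_inv_le hD1 hDrec hn]⟩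
end

section
/- Let n ≥ 1, let z_1, …, z_{n!} ∈ ℂ, let ξ = exp(2πi/(n+1)) and K ∈ ℂ, and define w_{k,l} = z_k + ξ^l K for 1 ≤ k ≤ n! and 0 ≤ l ≤ n. Then for every 1 ≤ j ≤ n, (1/(n+1)!) Σ_{k,l} w_{k,l}^j = (1/n!) Σ_{k=1}^{n!} z_k^j, and (1/(n+1)!) Σ_{k,l} w_{k,l}^{n+1} = K^{n+1} + (1/n!) Σ_{k=1}^{n!} z_k^{n+1}. -/
/-!
Expand `(z + ξ^l K)^j` binomially and sum over `l` first: the coefficient of `z^{j-m} K^m` picks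
up the geometric sum `∑_l ξ^{lm}`, which is `n+1` when `(n+1) ∣ m` and `0` otherwise. For
`j ≤ n+1` only `m = 0` survives, and for `j = n+1` also `m = n+1`, contributing `(n+1) K^{n+1}`;
the factor `n+1` is absorbed by `(n+1)! = (n+1) n!`.
-/

open Finset

theorem sum_range_add_mul_pow_pow {R : Type*} [CommSemiring R] (x y ζ : R) (N j : ℕ) :
    ∑ l ∈ range N, (x + ζ ^ l * y) ^ j =
      ∑ m ∈ range (j + 1), y ^ m * x ^ (j - m) * j.choose m * ∑ l ∈ range N, (ζ ^ m) ^ l := by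
  simp_rw [add_comm x, add_pow, sum_comm (s := range N), mul_sum]
  refine sum_congr rfl fun m _ => sum_congr rfl fun l _ => ?_
  ring

namespace IsPrimitiveRoot

variable {R : Type*} [CommRing R] [IsDomain R] {ζ : R} {N : ℕ}

theorem geom_sum_pow_eq_zero (hζ : IsPrimitiveRoot ζ N) {m : ℕ} (hm : ¬N ∣ m) :
    ∑ l ∈ range N, (ζ ^ m) ^ l = 0 := by
  have hne : ζ ^ m ≠ 1 := fun h => hm (hζ.pow_eq_one_iff_dvd m |>.mp h)
  refine eq_zero_of_ne_zero_of_mul_left_eq_zero (sub_ne_zero_of_ne hne.symm) ?_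
  rw [mul_neg_geom_sum, ← pow_mul, mul_comm, pow_mul, hζ.pow_eq_one, one_pow, sub_self]

theorem sum_range_add_mul_pow_pow_of_lt (hζ : IsPrimitiveRoot ζ N) (x y : R) {j : ℕ}
    (hj : j < N) : ∑ l ∈ range N, (x + ζ ^ l * y) ^ j = N * x ^ j := by
  rw [sum_range_add_mul_pow_pow, sum_eq_single 0]
  · simp [mul_comm]
  · intro m hm hm0
    rw [hζ.geom_sum_pow_eq_zero (Nat.not_dvd_of_pos_of_lt (Nat.pos_of_ne_zero hm0)
      ((mem_range.mp hm).trans_le hj)), mul_zero]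
  · simp

theorem sum_range_add_mul_pow_pow_self (hζ : IsPrimitiveRoot ζ N) (x y : R) :
    ∑ l ∈ range N, (x + ζ ^ l * y) ^ N = N * (x ^ N + y ^ N) := by
  rw [sum_range_add_mul_pow_pow, sum_range_succ, sum_eq_single 0]
  · simp [hζ.pow_eq_one]
    ring
  · intro m hm hm0
    rw [hζ.geom_sum_pow_eq_zero (Nat.not_dvd_of_pos_of_lt (Nat.pos_of_ne_zero hm0)
      (mem_range.mp hm)), mul_zero]
  · intro h
    simp [show N = 0 by simpa using h]

end IsPrimitiveRoot

theorem w_power_sums_general (n : ℕ) (z : Fin (Nat.factorial n) → ℂ)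
    (ξ K : ℂ) (hξ : ξ = Complex.exp (2 * Real.pi * Complex.I / (n + 1))) :
    (∀ j : ℕ, 1 ≤ j → j ≤ n →
      (1 / (Nat.factorial (n + 1) : ℂ)) *
          ∑ k, ∑ l ∈ Finset.range (n + 1), (z k + ξ ^ l * K) ^ j =
        (1 / (Nat.factorial n : ℂ)) * ∑ k, z k ^ j) ∧
    (1 / (Nat.factorial (n + 1) : ℂ)) *
        ∑ k, ∑ l ∈ Finset.range (n + 1), (z k + ξ ^ l * K) ^ (n + 1) =
      K ^ (n + 1) + (1 / (Nat.factorial n : ℂ)) * ∑ k, z k ^ (n + 1) := by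
  have hprim : IsPrimitiveRoot ξ (n + 1) := by
    simpa [hξ] using Complex.isPrimitiveRoot_exp (n + 1) n.succ_ne_zero
  have hnorm : ∀ s : ℂ,
      1 / (Nat.factorial (n + 1) : ℂ) * ((n + 1 : ℕ) * s) = 1 / (Nat.factorial n : ℂ) * s := by
    intro s
    rw [Nat.factorial_succ]
    push_cast
    field_simp
  refine ⟨fun j _ hj => ?_, ?_⟩
  · simp_rw [hprim.sum_range_add_mul_pow_pow_of_lt _ _ (Nat.lt_succ_of_le hj), ← mul_sum, hnorm]
  · simp_rw [hprim.sum_range_add_mul_pow_pow_self, ← mul_sum, hnorm, sum_add_distrib, sum_const,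
      card_univ, Fintype.card_fin, nsmul_eq_mul]
    rw [mul_add, add_comm, ← mul_assoc,
      one_div_mul_cancel (Nat.cast_ne_zero.mpr n.factorial_ne_zero), one_mul]

/-- For w_{k,l} = z_k + ξ^l K with ξ = exp(2πi/(n+1)): the first n normalized power
sums of the w's equal those of the z's, and the (n+1)-th one is shifted by K^{n+1}. -/
theorem w_power_sums (n : ℕ) (hn : 1 ≤ n) (z : Fin (Nat.factorial n) → ℂ)
    (ξ K : ℂ) (hξ : ξ = Complex.exp (2 * Real.pi * Complex.I / (n + 1))) :
    (∀ j : ℕ, 1 ≤ j → j ≤ n →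
      (1 / (Nat.factorial (n + 1) : ℂ)) *
          ∑ k, ∑ l ∈ Finset.range (n + 1), (z k + ξ ^ l * K) ^ j =
        (1 / (Nat.factorial n : ℂ)) * ∑ k, z k ^ j) ∧
    (1 / (Nat.factorial (n + 1) : ℂ)) *
        ∑ k, ∑ l ∈ Finset.range (n + 1), (z k + ξ ^ l * K) ^ (n + 1) =
      K ^ (n + 1) + (1 / (Nat.factorial n : ℂ)) * ∑ k, z k ^ (n + 1) :=
  w_power_sums_general n z ξ K hξ
end

section
/- For every n ≥ 1, every m ≥ n, and all complex numbers A_1, …, A_n, the system (1/m)(z_1^j + ⋯ + z_m^j) = A_j^j, 1 ≤ j ≤ n, has a solution (z_1, …, z_m) ∈ ℂ^m. -/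
/-!
Since `m ≥ n`, it suffices to prescribe all `m` power sums `p_1, …, p_m` of `m` complex numbers.
Newton's identities `k e_k = (-1)^(k+1) ∑_{i<k} (-1)^i e_i p_(k-i)` determine the elementary
symmetric values `e_1, …, e_m` recursively from the `p_k` (dividing by `k` in characteristic zero),
and conversely determine the `p_k` from the `e_k`. The `m` roots of
`X^m - e_1 X^(m-1) + ⋯ + (-1)^m e_m` have these elementary symmetric values, hence these power sums.
-/

open Finset Polynomial

theorem Finset.Nat.sum_antidiagonal_filter_fst_lt {M : Type*} [AddCommMonoid M] (k : ℕ)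
    (f : ℕ → ℕ → M) :
    ∑ a ∈ antidiagonal k with a.1 < k, f a.1 a.2 = ∑ i ∈ range k, f i (k - i) := by
  rw [sum_filter, Nat.sum_antidiagonal_eq_sum_range_succ_mk, sum_range_succ, if_neg (lt_irrefl k),
    add_zero]
  exact sum_congr rfl fun i hi => if_pos (mem_range.mp hi)

section Newton

variable {R : Type*} [CommRing R]

def SatisfiesNewton (N : ℕ) (e p : ℕ → R) : Prop :=
  ∀ k ∈ Icc 1 N, (k : R) * e k = (-1) ^ (k + 1) * ∑ i ∈ range k, (-1) ^ i * e i * p (k - i)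

theorem satisfiesNewton_esymm_psum {σ : Type*} [Fintype σ] (z : σ → R) (N : ℕ) :
    SatisfiesNewton N (univ.val.map z).esymm fun k => ∑ i, z i ^ k := by
  intro k _
  have := congrArg (MvPolynomial.aeval z) (MvPolynomial.mul_esymm_eq_sum σ R k)
  simp only [map_mul, map_natCast, map_pow, map_neg, map_one, map_sum,
    MvPolynomial.aeval_esymm_eq_multiset_esymm, MvPolynomial.psum, MvPolynomial.aeval_X] at this
  rwa [Finset.Nat.sum_antidiagonal_filter_fst_lt k
    fun i j => (-1) ^ i * (univ.val.map z).esymm i * ∑ x, z x ^ j] at this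

theorem SatisfiesNewton.eq_of_left_eq {N : ℕ} {e e' p q : ℕ → R} (h : SatisfiesNewton N e p)
    (h' : SatisfiesNewton N e' q) (he : ∀ k ≤ N, e k = e' k) (he0 : e 0 = 1) :
    ∀ k ∈ Icc 1 N, p k = q k := by
  intro k hk
  induction k using Nat.strong_induction_on with
  | _ k ih =>
  obtain ⟨hk1, hkN⟩ := mem_Icc.mp hk
  obtain ⟨k, rfl⟩ := Nat.exists_eq_add_of_le' hk1
  have hsum : ∑ i ∈ range (k + 1), (-1) ^ i * e i * p (k + 1 - i)
      = ∑ i ∈ range (k + 1), (-1) ^ i * e' i * q (k + 1 - i) := by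
    have := (h _ hk).symm.trans ((he _ hkN) ▸ h' _ hk)
    exact (isUnit_neg_one.pow _).mul_left_cancel this
  -- only the `i = 0` summands, `e 0 * p (k + 1)` and `e' 0 * q (k + 1)`, can differ
  rw [sum_range_succ', sum_range_succ'] at hsum
  have htail : ∑ i ∈ range k, (-1) ^ (i + 1) * e (i + 1) * p (k + 1 - (i + 1))
      = ∑ i ∈ range k, (-1) ^ (i + 1) * e' (i + 1) * q (k + 1 - (i + 1)) := by
    refine sum_congr rfl fun i hi => ?_
    have hi := mem_range.mp hi
    rw [he _ (by omega), ih _ (by omega) (mem_Icc.mpr ⟨by omega, by omega⟩)]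
  rw [htail, add_right_inj, ← he 0 (Nat.zero_le _), he0] at hsum
  simpa using hsum

end Newton

noncomputable def newtonESymm {K : Type*} [Field K] (p : ℕ → K) : ℕ → K
  | 0 => 1
  | k + 1 => (-1) ^ k / (k + 1) *
      ∑ i ∈ (range (k + 1)).attach, (-1) ^ (i : ℕ) * newtonESymm p i * p (k + 1 - i)
decreasing_by exact mem_range.mp i.2

theorem satisfiesNewton_newtonESymm {K : Type*} [Field K] [CharZero K] (p : ℕ → K) (N : ℕ) :
    SatisfiesNewton N (newtonESymm p) p := by
  intro k hk
  obtain ⟨k, rfl⟩ := Nat.exists_eq_add_of_le' (mem_Icc.mp hk).1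
  rw [newtonESymm, sum_attach (range (k + 1)) fun i => (-1) ^ i * newtonESymm p i * p (k + 1 - i)]
  have : ((k + 1 : ℕ) : K) ≠ 0 := Nat.cast_ne_zero.mpr k.succ_ne_zero
  push_cast at this ⊢
  field_simp
  ring

theorem Multiset.exists_univ_map_eq {α : Type*} {m : ℕ} (s : Multiset α) (hs : card s = m) :
    ∃ z : Fin m → α, univ.val.map z = s := by
  subst hs
  refine ⟨fun i => s.toList.get (i.cast s.length_toList.symm), ?_⟩
  rw [Fin.univ_val_map, ← List.ofFn_congr s.length_toList, List.ofFn_get, Multiset.coe_toList]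

theorem IsAlgClosed.exists_multiset_esymm_eq {K : Type*} [Field K] [IsAlgClosed K] (m : ℕ)
    (e : ℕ → K) : ∃ s : Multiset K, Multiset.card s = m ∧ ∀ k ∈ Icc 1 m, s.esymm k = e k := by
  set Q : K[X] := X ^ m + ∑ i : Fin m, C ((-1) ^ (m - i) * e (m - i)) * X ^ (i : ℕ)
  have hQ : Q.Monic := monic_X_pow_add (degree_sum_fin_lt _)
  have hdeg : Q.natDegree = m := by
    rw [natDegree_add_eq_left_of_degree_lt, natDegree_X_pow]
    simpa only [degree_X_pow] using degree_sum_fin_lt _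
  have hcoeff : ∀ i < m, Q.coeff i = (-1) ^ (m - i) * e (m - i) := by
    intro i hi
    rw [coeff_add, coeff_X_pow, if_neg hi.ne, zero_add, finsetSum_coeff,
      Fintype.sum_eq_single ⟨i, hi⟩ fun j hj => ?_, coeff_C_mul_X_pow, if_pos rfl]
    rw [coeff_C_mul_X_pow, if_neg fun h => hj (Fin.ext h.symm)]
  refine ⟨Q.roots, hdeg ▸ IsAlgClosed.card_roots_eq_natDegree, fun k hk => ?_⟩
  obtain ⟨hk1, hkm⟩ := mem_Icc.mp hk
  have := coeff_eq_esymm_roots_of_card IsAlgClosed.card_roots_eq_natDegree (hdeg ▸ Nat.sub_le m k)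
  rw [hcoeff _ (by omega), hQ.leadingCoeff, hdeg, Nat.sub_sub_self hkm, one_mul] at this
  exact ((isUnit_neg_one.pow _).mul_left_cancel this).symm

theorem IsAlgClosed.exists_sum_pow_eq {K : Type*} [Field K] [IsAlgClosed K] [CharZero K] (m : ℕ)
    (p : ℕ → K) : ∃ z : Fin m → K, ∀ k ∈ Icc 1 m, ∑ i, z i ^ k = p k := by
  obtain ⟨s, hcard, hs⟩ := exists_multiset_esymm_eq m (newtonESymm p)
  obtain ⟨z, rfl⟩ := s.exists_univ_map_eq hcard
  refine ⟨z, (satisfiesNewton_esymm_psum z _).eq_of_left_eq (satisfiesNewton_newtonESymm p _)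
    (fun k hk => ?_) (by simp [Multiset.esymm])⟩
  rcases k.eq_zero_or_pos with rfl | hk0
  · simp [Multiset.esymm, newtonESymm]
  · exact hs k (mem_Icc.mpr ⟨hk0, hk⟩)

theorem powerSum_system_underdetermined_general (n m : ℕ) (hm : n ≤ m)
    (A : Fin n → ℂ) :
    ∃ z : Fin m → ℂ,
      ∀ j : Fin n, (1 / (m : ℂ)) * ∑ k, z k ^ (j.1 + 1) = A j ^ (j.1 + 1) := by
  obtain ⟨z, hz⟩ := IsAlgClosed.exists_sum_pow_eq m
    fun k => m * (if h : k - 1 < n then A ⟨k - 1, h⟩ else 0) ^ k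
  refine ⟨z, fun j => ?_⟩
  have hj := j.is_lt
  have hm0 : (m : ℂ) ≠ 0 := Nat.cast_ne_zero.mpr (by omega)
  rw [hz (j + 1) (mem_Icc.mpr ⟨by omega, by omega⟩)]
  simp [hm0]

/-- For m ≥ n ≥ 1, the system (1/m)(z_1^j + ⋯ + z_m^j) = A_j^j, 1 ≤ j ≤ n,
has a solution in ℂ^m. -/
theorem powerSum_system_underdetermined (n m : ℕ) (hn : 1 ≤ n) (hm : n ≤ m)
    (A : Fin n → ℂ) :
    ∃ z : Fin m → ℂ,
      ∀ j : Fin n, (1 / (m : ℂ)) * ∑ k, z k ^ (j.1 + 1) = A j ^ (j.1 + 1) :=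
  powerSum_system_underdetermined_general n m hm A
end
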